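/- arXiv:2010.10861 — 6 statements merged into one kernel-verified Lean document; each statement's English description precedes it below -/
import Mathlib

section
/- Let $p_0 \in [0,1]$ and define $g(r) = p_0/(r+1)$ for $r \ge 0$, with the convention $g(-1)=1$. Then $\sum_{r=0}^{\infty} \left[\prod_{i=0}^{r-1} g(i)\right](1-g(r))(r+1) = e^{p_0}$. -/
/-!
With `P r = p0 ^ r / r !` the probability that the first `r` attempts fail, the `r`-th term is
`(r + 1) (P r - P (r + 1))`, the weight of "first success at attempt `r + 1`". Summation by parts
(the tail-sum formula for an expectation) turns the series into `∑ P r = exp p0`; the boundary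
terms `n P n` form a summable sequence, so they cancel telescopically.
-/

open Finset Nat

theorem hasSum_succ_nsmul_sub_succ {α : Type*} [AddCommGroup α] [TopologicalSpace α]
    [IsTopologicalAddGroup α] {P : ℕ → α} {s : α} (hP : HasSum P s)
    (hnP : Summable fun n => n • P n) :
    HasSum (fun r => (r + 1) • (P r - P (r + 1))) s := by
  obtain ⟨B, hB⟩ := hnP
  have hB_succ : HasSum (fun n => (n + 1) • P (n + 1)) B := by
    simpa using (hasSum_nat_add_iff' 1).mpr hB
  convert hP.add (hB.sub hB_succ) using 1
  · funext r
    rw [smul_sub, succ_nsmul]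
    abel
  · abel

theorem prod_range_div_add_one (p : ℝ) (r : ℕ) :
    ∏ i ∈ range r, p / ((i : ℝ) + 1) = p ^ r / r ! := by
  rw [prod_div_distrib, prod_const, card_range, ← prod_range_add_one_eq_factorial]
  push_cast
  rfl

theorem summable_nsmul_pow_div_factorial (p : ℝ) : Summable fun n : ℕ => n • (p ^ n / n !) := by
  refine (summable_nat_add_iff 1).mp <| ((Real.summable_pow_div_factorial p).mul_left p).congr
    fun n => ?_
  rw [nsmul_eq_mul, factorial_succ]
  push_cast
  field_simp
  ring

theorem stmt_0_general (p0 : ℝ)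
    (g : ℤ → ℝ) (hg : ∀ r : ℤ, 0 ≤ r → g r = p0 / (r + 1)) :
    ∑' r : ℕ, (∏ i ∈ Finset.range r, g i) * (1 - g r) * ((r : ℝ) + 1) = Real.exp p0 := by
  have hprod : ∀ r : ℕ, ∏ i ∈ range r, g i = p0 ^ r / r ! := fun r => by
    rw [← prod_range_div_add_one]
    refine prod_congr rfl fun i _ => ?_
    rw [hg i i.cast_nonneg]
    push_cast
    rfl
  have hP : HasSum (fun n : ℕ => p0 ^ n / n !) (Real.exp p0) := by
    rw [Real.exp_eq_exp_ℝ]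
    exact NormedSpace.expSeries_div_hasSum_exp p0
  refine ((hasSum_succ_nsmul_sub_succ hP (summable_nsmul_pow_div_factorial p0)).congr_fun
    fun r => ?_).tsum_eq
  rw [mul_one_sub, ← prod_range_succ, hprod, hprod, nsmul_eq_mul]
  push_cast
  ring

theorem stmt_0 (p0 : ℝ) (hp0 : p0 ∈ Set.Icc (0:ℝ) 1)
    (g : ℤ → ℝ) (hg : ∀ r : ℤ, 0 ≤ r → g r = p0 / (r + 1)) (hgm : g (-1) = 1) :
    ∑' r : ℕ, (∏ i ∈ Finset.range r, g i) * (1 - g r) * ((r : ℝ) + 1) = Real.exp p0 :=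
  stmt_0_general p0 g hg
end

section
/- Let $p_0 \in [0,1]$ and define $g(r) = p_0/(r+1)$ for $r \ge 0$. Then $\sum_{r=0}^{\infty} \left[\prod_{i=0}^{r-1} g(i)\right](1-g(r))(r+1)^2 = (1+2p_0)e^{p_0}$. -/
open Real

lemma my_exp_tsum (x : ℝ) : Real.exp x = ∑' n : ℕ, x ^ n / n.factorial := by
  rw [Real.exp_eq_exp_ℝ, NormedSpace.exp_eq_tsum_div]

lemma my_prod (p0 : ℝ) (r : ℕ) :
    ∏ i ∈ Finset.range r, p0 / ((i : ℝ) + 1) = p0 ^ r / r.factorial := by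
  induction r with
  | zero => simp
  | succ n ih =>
      rw [Finset.prod_range_succ, ih, Nat.factorial_succ, pow_succ]
      push_cast
      rw [div_mul_div_comm]
      ring_nf

lemma s0 (p0 : ℝ) : Summable (fun n : ℕ => p0 ^ n / n.factorial) :=
  Real.summable_pow_div_factorial p0

lemma s1 (p0 : ℝ) : Summable (fun n : ℕ => (n : ℝ) * p0 ^ n / n.factorial) := by
  rw [← summable_nat_add_iff 1]
  have : (fun n : ℕ => ((n + 1 : ℕ) : ℝ) * p0 ^ (n + 1) / (n + 1).factorial)
      = fun n : ℕ => p0 * (p0 ^ n / n.factorial) := by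
    funext n
    rw [Nat.factorial_succ, pow_succ]
    push_cast
    field_simp
  exact this ▸ ((s0 p0).mul_left p0)

lemma s2 (p0 : ℝ) : Summable (fun n : ℕ => (n : ℝ) ^ 2 * p0 ^ n / n.factorial) := by
  rw [← summable_nat_add_iff 1]
  have : (fun n : ℕ => ((n + 1 : ℕ) : ℝ) ^ 2 * p0 ^ (n + 1) / (n + 1).factorial)
      = fun n : ℕ => p0 * ((n : ℝ) * p0 ^ n / n.factorial) + p0 * (p0 ^ n / n.factorial) := by
    funext n
    rw [Nat.factorial_succ, pow_succ]
    push_cast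
    field_simp
    ring
  exact this ▸ (((s1 p0).mul_left p0).add ((s0 p0).mul_left p0))

lemma u1 (p0 : ℝ) : ∑' n : ℕ, (n : ℝ) * p0 ^ n / n.factorial = p0 * Real.exp p0 := by
  rw [Summable.tsum_eq_zero_add (s1 p0)]
  have : (fun n : ℕ => ((n + 1 : ℕ) : ℝ) * p0 ^ (n + 1) / (n + 1).factorial)
      = fun n : ℕ => p0 * (p0 ^ n / n.factorial) := by
    funext n
    rw [Nat.factorial_succ, pow_succ]
    push_cast
    field_simp
  simp only [this, tsum_mul_left, ← my_exp_tsum]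
  simp

lemma u2 (p0 : ℝ) : ∑' n : ℕ, (n : ℝ) ^ 2 * p0 ^ n / n.factorial
    = (p0 ^ 2 + p0) * Real.exp p0 := by
  rw [Summable.tsum_eq_zero_add (s2 p0)]
  have : (fun n : ℕ => ((n + 1 : ℕ) : ℝ) ^ 2 * p0 ^ (n + 1) / (n + 1).factorial)
      = fun n : ℕ => p0 * ((n : ℝ) * p0 ^ n / n.factorial) + p0 * (p0 ^ n / n.factorial) := by
    funext n
    rw [Nat.factorial_succ, pow_succ]
    push_cast
    field_simp
    ring
  rw [this]
  rw [Summable.tsum_add (((s1 p0).mul_left p0)) (((s0 p0).mul_left p0)), tsum_mul_left, tsum_mul_left,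
    u1 p0, ← my_exp_tsum]
  push_cast
  ring

theorem stmt_1 (p0 : ℝ) (hp0 : p0 ∈ Set.Icc (0:ℝ) 1)
    (g : ℕ → ℝ) (hg : ∀ r : ℕ, g r = p0 / (r + 1)) :
    ∑' r : ℕ, (∏ i ∈ Finset.range r, g i) * (1 - g r) * ((r : ℝ) + 1) ^ 2
      = (1 + 2 * p0) * Real.exp p0 := by
  have key : ∀ r : ℕ, (∏ i ∈ Finset.range r, g i) * (1 - g r) * ((r : ℝ) + 1) ^ 2
      = ((r : ℝ) ^ 2 * p0 ^ r / r.factorial + 2 * ((r : ℝ) * p0 ^ r / r.factorial)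
          + p0 ^ r / r.factorial)
        - (p0 * ((r : ℝ) * p0 ^ r / r.factorial) + p0 * (p0 ^ r / r.factorial)) := by
    intro r
    have hgr := hg r
    have h1 : (∏ i ∈ Finset.range r, g i) = p0 ^ r / r.factorial := by
      rw [← my_prod p0 r]
      exact Finset.prod_congr rfl fun i _ => hg i
    rw [h1, hgr]
    have hr1 : ((r : ℝ) + 1) ≠ 0 := by positivity
    have hf : ((r.factorial : ℝ)) ≠ 0 := by
      exact_mod_cast r.factorial_ne_zero
    field_simp
    ring
  simp only [key]
  have sA : Summable (fun r : ℕ => (r : ℝ) ^ 2 * p0 ^ r / r.factorial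
      + 2 * ((r : ℝ) * p0 ^ r / r.factorial) + p0 ^ r / r.factorial) :=
    ((s2 p0).add ((s1 p0).mul_left 2)).add (s0 p0)
  have sB : Summable (fun r : ℕ => p0 * ((r : ℝ) * p0 ^ r / r.factorial)
      + p0 * (p0 ^ r / r.factorial)) :=
    ((s1 p0).mul_left p0).add ((s0 p0).mul_left p0)
  rw [Summable.tsum_sub sA sB,
    Summable.tsum_add ((s2 p0).add ((s1 p0).mul_left 2)) (s0 p0),
    Summable.tsum_add (s2 p0) ((s1 p0).mul_left 2),
    Summable.tsum_add ((s1 p0).mul_left p0) ((s0 p0).mul_left p0),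
    tsum_mul_left, tsum_mul_left, tsum_mul_left, u1, u2, ← my_exp_tsum]
  ring
end

section
/- Let $p_0 \in (0,1]$ and $\lambda \in (0,1)$. Then $\sum_{r=0}^{\infty} p_0^r \lambda^{r(r-1)/2} \le 1 + \left(1 + \sqrt{\frac{2\pi}{-\log\lambda}}\right) p_0$. -/
open Real MeasureTheory Set

/-- Gaussian sum bound via the Gaussian integral. -/
lemma gauss_sum_le (a : ℝ) (ha : 0 < a) :
    ∑' k : ℕ, Real.exp (-a * ((k : ℝ) + 1) ^ 2) ≤ Real.sqrt (Real.pi / a) := by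
  have hint : Integrable (fun x : ℝ => Real.exp (-a * x ^ 2)) := integrable_exp_neg_mul_sq ha
  apply Real.tsum_le_of_sum_range_le (fun n => (Real.exp_nonneg _)) -- partial sums bounded
  intro n
  have hanti : AntitoneOn (fun x : ℝ => Real.exp (-a * x ^ 2)) (Icc (0:ℝ) (0 + n)) := by
    intro x hx y hy hxy
    simp only [exp_le_exp]
    have : x ^ 2 ≤ y ^ 2 := by nlinarith [hx.1, hy.1]
    nlinarith
  have h1 := hanti.sum_le_integral (x₀ := 0) (a := n)
  have h2 : (∑ i ∈ Finset.range n, Real.exp (-a * ((i : ℝ) + 1) ^ 2))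
      ≤ ∫ x in (0:ℝ)..(0 + n : ℝ), Real.exp (-a * x ^ 2) := by
    refine le_trans (le_of_eq ?_) h1
    refine Finset.sum_congr rfl fun i _ => ?_
    push_cast
    ring_nf
  have h3 : (∫ x in (0:ℝ)..(0 + n : ℝ), Real.exp (-a * x ^ 2))
      ≤ ∫ x in Ioi (0:ℝ), Real.exp (-a * x ^ 2) := by
    rw [intervalIntegral.integral_of_le (by positivity)]
    refine setIntegral_mono_set hint.integrableOn ?_ ?_
    · filter_upwards with x using Real.exp_nonneg _
    · filter_upwards with x hx using hx.1
  have h4 : (∫ x in Ioi (0:ℝ), Real.exp (-a * x ^ 2)) = Real.sqrt (Real.pi / a) / 2 :=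
    integral_gaussian_Ioi a
  have h5 : Real.sqrt (Real.pi / a) / 2 ≤ Real.sqrt (Real.pi / a) :=
    half_le_self (Real.sqrt_nonneg _)
  linarith

theorem stmt_4 (p0 l : ℝ) (hp0 : p0 ∈ Set.Ioc (0:ℝ) 1) (hl : l ∈ Set.Ioo (0:ℝ) 1) :
    ∑' r : ℕ, p0 ^ r * l ^ (r * (r - 1) / 2)
      ≤ 1 + (1 + Real.sqrt (2 * Real.pi / (-Real.log l))) * p0 := by
  obtain ⟨hp0pos, hp0le⟩ := hp0
  obtain ⟨hl0, hl1⟩ := hl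
  set q : ℝ := Real.sqrt l with hq
  have hq0 : 0 < q := Real.sqrt_pos.mpr hl0
  have hq1 : q < 1 := by
    rw [hq, show (1:ℝ) = Real.sqrt 1 by simp]
    exact Real.sqrt_lt_sqrt hl0.le hl1
  have hqsq : q ^ 2 = l := Real.sq_sqrt hl0.le
  set f : ℕ → ℝ := fun r => p0 ^ r * l ^ (r * (r - 1) / 2) with hf
  have hfnonneg : ∀ r, 0 ≤ f r := fun r => by positivity
  -- exponent lower bound
  have hexp : ∀ r : ℕ, r - 1 ≤ r * (r - 1) / 2 := by
    intro r
    rcases r with _ | _ | r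
    · simp
    · simp
    · rw [Nat.le_div_iff_mul_le (by norm_num)]
      simp only [Nat.add_sub_cancel]
      nlinarith
  -- summability of f
  have hgsum : Summable (fun r : ℕ => l⁻¹ * l ^ r) :=
    (summable_geometric_of_lt_one hl0.le hl1).mul_left _
  have hfsum : Summable f := by
    refine Summable.of_nonneg_of_le hfnonneg (fun r => ?_) hgsum
    · have h1 : f r ≤ l ^ (r - 1) := by
        calc f r ≤ 1 * l ^ (r * (r - 1) / 2) := by
              apply mul_le_mul_of_nonneg_right _ (by positivity)
              exact pow_le_one₀ hp0pos.le hp0le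
          _ = l ^ (r * (r - 1) / 2) := one_mul _
          _ ≤ l ^ (r - 1) := pow_le_pow_of_le_one hl0.le hl1.le (hexp r)
      refine h1.trans ?_
      rw [le_inv_mul_iff₀ hl0, ← pow_succ']
      exact pow_le_pow_of_le_one hl0.le hl1.le (by omega)
  -- the Gaussian-type sum
  have hlog : Real.log q < 0 := Real.log_neg hq0 hq1
  set a : ℝ := -Real.log q with ha
  have ha0 : 0 < a := by linarith
  have hqpow : ∀ n : ℕ, q ^ n = Real.exp (-a * n) := by
    intro n
    have h1 : q ^ n = Real.exp (Real.log q) ^ n := by rw [Real.exp_log hq0]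
    rw [h1, ← Real.exp_nat_mul]
    congr 1
    rw [ha]
    ring
  have hSsum : Summable (fun k : ℕ => q ^ ((k + 1) ^ 2)) :=
    Summable.of_nonneg_of_le (fun k => by positivity)
      (fun k => pow_le_pow_of_le_one hq0.le hq1.le (by nlinarith))
      (summable_geometric_of_lt_one hq0.le hq1)
  have hS : (∑' k : ℕ, q ^ ((k + 1) ^ 2)) ≤ Real.sqrt (2 * Real.pi / (-Real.log l)) := by
    have heq : (fun k : ℕ => q ^ ((k + 1) ^ 2))
        = fun k : ℕ => Real.exp (-a * ((k : ℝ) + 1) ^ 2) := by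
      funext k
      rw [hqpow]
      push_cast
      ring_nf
    have hb := gauss_sum_le a ha0
    rw [← heq] at hb
    refine hb.trans (le_of_eq ?_)
    congr 1
    rw [ha, hq, Real.log_sqrt hl0.le]
    have : Real.log l < 0 := Real.log_neg hl0 hl1
    field_simp
  -- bound each tail term
  have htail_term : ∀ k : ℕ, f (k + 2) ≤ p0 * q ^ ((k + 1) ^ 2) := by
    intro k
    have he : (k + 2) * ((k + 2) - 1) / 2 = (k + 2) * (k + 1) / 2 := by
      congr 1
    have heven : 2 ∣ (k + 2) * (k + 1) := by
      rw [mul_comm]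
      exact (Nat.even_mul_succ_self (k + 1)).two_dvd
    have hl_pow : l ^ ((k + 2) * ((k + 2) - 1) / 2) = q ^ ((k + 2) * (k + 1)) := by
      rw [he, ← hqsq, ← pow_mul, Nat.mul_div_cancel' heven]
    have h1 : p0 ^ (k + 2) ≤ p0 := pow_le_of_le_one hp0pos.le hp0le (by omega)
    have h2 : q ^ ((k + 2) * (k + 1)) ≤ q ^ ((k + 1) ^ 2) :=
      pow_le_pow_of_le_one hq0.le hq1.le (by nlinarith)
    calc f (k + 2) = p0 ^ (k + 2) * l ^ ((k + 2) * ((k + 2) - 1) / 2) := rfl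
      _ = p0 ^ (k + 2) * q ^ ((k + 2) * (k + 1)) := by rw [hl_pow]
      _ ≤ p0 * q ^ ((k + 1) ^ 2) := by
          apply mul_le_mul h1 h2 (by positivity) hp0pos.le
  -- split off first two terms
  have hsum1 : Summable fun k => f (k + 1) := by
    rw [summable_nat_add_iff]
    exact hfsum
  have hsum2 : Summable fun k => f (k + 2) := by
    rw [summable_nat_add_iff]
    exact hfsum
  have hsplit : (∑' r, f r) = f 0 + (f 1 + ∑' k, f (k + 2)) := by
    rw [Summable.tsum_eq_zero_add hfsum]
    congr 1
    rw [Summable.tsum_eq_zero_add hsum1]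
  have hf0 : f 0 = 1 := by simp [hf]
  have hf1 : f 1 = p0 := by simp [hf]
  have htail : (∑' k, f (k + 2)) ≤ p0 * Real.sqrt (2 * Real.pi / (-Real.log l)) := by
    calc (∑' k, f (k + 2)) ≤ ∑' k : ℕ, p0 * q ^ ((k + 1) ^ 2) :=
          Summable.tsum_le_tsum htail_term hsum2 (hSsum.mul_left _)
      _ = p0 * ∑' k : ℕ, q ^ ((k + 1) ^ 2) := tsum_mul_left
      _ ≤ p0 * Real.sqrt (2 * Real.pi / (-Real.log l)) := by
          exact mul_le_mul_of_nonneg_left hS hp0pos.le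
  calc (∑' r : ℕ, p0 ^ r * l ^ (r * (r - 1) / 2)) = f 0 + (f 1 + ∑' k, f (k + 2)) := hsplit
    _ ≤ 1 + (p0 + p0 * Real.sqrt (2 * Real.pi / (-Real.log l))) := by
        rw [hf0, hf1]; linarith
    _ = 1 + (1 + Real.sqrt (2 * Real.pi / (-Real.log l))) * p0 := by ring
end

section
/- Let $p_0 \in (0,1]$, $\lambda \in (0,1)$, and $R \in \mathbb{N}$ with $R \ge 1$. Then $\sum_{r=0}^{\infty} p_0^r\lambda^{r(r-1)/2} \le \sum_{r=0}^{R-1} p_0^r\lambda^{r(r-1)/2} + \left(1 + \sqrt{\frac{2\pi}{-\log\lambda}}\right) p_0^R\lambda^{R(R-1)/2}$. -/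
open MeasureTheory Real Set Finset

/-! Write `a = -log λ`. Since `r(r-1)/2` is quadratic in `r`, shifting by `R ≥ 1` gives
`p₀^(k+R) λ^((k+R)(k+R-1)/2) ≤ p₀^R λ^(R(R-1)/2) · exp(-a k²/2)`, so the tail of the series is
dominated by `p₀^R λ^(R(R-1)/2)` times a Gaussian sum. Comparing that sum with the integral of
the decreasing function `x ↦ exp(-a x²/2)` over `[0, ∞)` bounds it by `1 + √(2π/a)/2`. -/

lemma sum_range_exp_neg_mul_sq_le {c : ℝ} (hc : 0 < c) (n : ℕ) :
    ∑ k ∈ range n, exp (-c * (k : ℝ) ^ 2) ≤ 1 + √(π / c) / 2 := by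
  cases n with
  | zero => simp only [range_zero, sum_empty]; positivity
  | succ n =>
    have hanti : AntitoneOn (fun x : ℝ => exp (-c * x ^ 2)) (Icc 0 (0 + n)) := by
      intro x hx y _ hxy
      have hsq : x ^ 2 ≤ y ^ 2 := pow_le_pow_left₀ hx.1 hxy 2
      exact exp_le_exp.2 (by nlinarith)
    have hsum : ∑ k ∈ range n, exp (-c * ((k + 1 : ℕ) : ℝ) ^ 2)
        ≤ ∫ x in (0 : ℝ)..n, exp (-c * x ^ 2) := by
      simpa using hanti.sum_le_integral
    have hint : ∫ x in (0 : ℝ)..n, exp (-c * x ^ 2) ≤ √(π / c) / 2 := by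
      rw [intervalIntegral.integral_of_le n.cast_nonneg, ← integral_gaussian_Ioi c]
      exact setIntegral_mono_set (integrable_exp_neg_mul_sq hc).integrableOn
        (.of_forall fun _ => (exp_pos _).le) (.of_forall Ioc_subset_Ioi_self)
    have hzero : exp (-c * ((0 : ℕ) : ℝ) ^ 2) = 1 := by simp
    rw [sum_range_succ', hzero]
    linarith

lemma summable_exp_neg_mul_sq {c : ℝ} (hc : 0 < c) :
    Summable fun k : ℕ => exp (-c * (k : ℝ) ^ 2) :=
  summable_of_sum_range_le (fun _ => (exp_pos _).le) (sum_range_exp_neg_mul_sq_le hc)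

lemma tsum_exp_neg_mul_sq_le {c : ℝ} (hc : 0 < c) :
    ∑' k : ℕ, exp (-c * (k : ℝ) ^ 2) ≤ 1 + √(π / c) / 2 :=
  Real.tsum_le_of_sum_range_le (fun _ => (exp_pos _).le) (sum_range_exp_neg_mul_sq_le hc)

lemma pow_mul_pred_div_two_eq_exp {l : ℝ} (hl : 0 < l) (n : ℕ) :
    l ^ (n * (n - 1) / 2) = exp (log l * (n * (n - 1) / 2)) := by
  rw [← Nat.choose_two_right, ← rpow_natCast, rpow_def_of_pos hl, Nat.cast_choose_two]

lemma pow_add_mul_pow_mul_pred_div_two_le {p l : ℝ} (hp0 : 0 ≤ p) (hp1 : p ≤ 1) (hl0 : 0 < l)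
    (hl1 : l ≤ 1) {R : ℕ} (hR : 1 ≤ R) (k : ℕ) :
    p ^ (k + R) * l ^ ((k + R) * (k + R - 1) / 2)
      ≤ p ^ R * l ^ (R * (R - 1) / 2) * exp (log l / 2 * (k : ℝ) ^ 2) := by
  have hlog : log l ≤ 0 := log_nonpos hl0.le hl1
  have hR' : (1 : ℝ) ≤ R := by exact_mod_cast hR
  have hexp : log l * (((k + R : ℕ) : ℝ) * ((k + R : ℕ) - 1) / 2)
      ≤ log l * (R * (R - 1) / 2) + log l / 2 * (k : ℝ) ^ 2 := by
    have hk : (0 : ℝ) ≤ k * (2 * R - 1) := mul_nonneg k.cast_nonneg (by linarith)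
    push_cast
    nlinarith [mul_nonpos_of_nonpos_of_nonneg hlog hk]
  rw [pow_mul_pred_div_two_eq_exp hl0, pow_mul_pred_div_two_eq_exp hl0, mul_assoc, ← exp_add,
    pow_add, mul_assoc]
  refine (mul_le_of_le_one_left (by positivity) (pow_le_one₀ hp0 hp1)).trans ?_
  gcongr

theorem stmt_8 (p0 l : ℝ) (hp0 : p0 ∈ Set.Ioc (0:ℝ) 1) (hl : l ∈ Set.Ioo (0:ℝ) 1)
    (R : ℕ) (hR : 1 ≤ R) :
    ∑' r : ℕ, p0 ^ r * l ^ (r * (r - 1) / 2)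
      ≤ (∑ r ∈ Finset.range R, p0 ^ r * l ^ (r * (r - 1) / 2))
        + (1 + Real.sqrt (2 * Real.pi / (-Real.log l))) * p0 ^ R * l ^ (R * (R - 1) / 2) := by
  obtain ⟨hp0, hp1⟩ := hp0
  obtain ⟨hl0, hl1⟩ := hl
  set f : ℕ → ℝ := fun r => p0 ^ r * l ^ (r * (r - 1) / 2)
  have hc : 0 < -log l / 2 := by linarith [log_neg hl0 hl1]
  set c := -log l / 2 with hc_def
  have hbound (k : ℕ) : f (k + R) ≤ f R * exp (-c * (k : ℝ) ^ 2) :=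
    (pow_add_mul_pow_mul_pred_div_two_le hp0.le hp1 hl0 hl1.le hR k).trans_eq
      (by rw [hc_def, neg_div, neg_neg])
  have htail : Summable fun k => f (k + R) :=
    .of_nonneg_of_le (fun k => by positivity) hbound ((summable_exp_neg_mul_sq hc).mul_left _)
  rw [← ((summable_nat_add_iff R).1 htail).sum_add_tsum_nat_add R]
  gcongr
  calc ∑' k, f (k + R) ≤ ∑' k : ℕ, f R * exp (-c * (k : ℝ) ^ 2) :=
        htail.tsum_le_tsum hbound ((summable_exp_neg_mul_sq hc).mul_left _)
    _ = f R * ∑' k : ℕ, exp (-c * (k : ℝ) ^ 2) := tsum_mul_left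
    _ ≤ f R * (1 + √(π / c) / 2) := by gcongr; exact tsum_exp_neg_mul_sq_le hc
    _ ≤ (1 + √(2 * π / (-log l))) * f R := by
        have hπc : π / c = 2 * π / (-log l) := by rw [hc_def]; field_simp
        rw [hπc, mul_comm]
        gcongr
        linarith [sqrt_nonneg (2 * π / (-log l))]
    _ = _ := by rw [mul_assoc]
end

section
/- Let $g_1,\dots,g_N$ be reals with $1 \le g_n \le e$ for all $n$. Then $\frac{\frac{1}{N}\sum_n g_n - \left(\frac{1}{N}\sum_n \sqrt{g_n}\right)^2}{\left(\frac{1}{N}\sum_n \sqrt{g_n}\right)^2} \le \frac{(\sqrt{e}-1)^2}{4\sqrt{e}}$. -/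
theorem stmt_14 (N : ℕ) (hN : 0 < N) (g : Fin N → ℝ)
    (hg : ∀ n, 1 ≤ g n ∧ g n ≤ Real.exp 1) :
    ((1 / N) * ∑ n, g n - ((1 / N) * ∑ n, Real.sqrt (g n)) ^ 2)
        / ((1 / N) * ∑ n, Real.sqrt (g n)) ^ 2
      ≤ (Real.sqrt (Real.exp 1) - 1) ^ 2 / (4 * Real.sqrt (Real.exp 1)) := by
  set a := Real.sqrt (Real.exp 1) with ha
  have ha1 : 1 < a := by
    rw [ha, show (1:ℝ) < Real.sqrt (Real.exp 1) ↔ (1:ℝ)^2 < Real.exp 1 from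
      Real.lt_sqrt zero_le_one]
    have := Real.add_one_lt_exp (x := (1:ℝ)) (by norm_num)
    nlinarith
  have hNpos : (0:ℝ) < N := by exact_mod_cast hN
  set x : Fin N → ℝ := fun n => Real.sqrt (g n) with hx
  have hx1 : ∀ n, 1 ≤ x n := fun n => by
    rw [hx, show (1:ℝ) = Real.sqrt 1 by simp]
    exact Real.sqrt_le_sqrt (hg n).1
  have hxa : ∀ n, x n ≤ a := fun n => Real.sqrt_le_sqrt (hg n).2
  have hgx : ∀ n, g n = (x n) ^ 2 := fun n => by
    rw [hx]; simp [Real.sq_sqrt (by linarith [(hg n).1] : (0:ℝ) ≤ g n)]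
  -- pointwise bound
  have key : ∀ n, g n ≤ (a + 1) * x n - a := fun n => by
    rw [hgx n]; nlinarith [hx1 n, hxa n]
  have hsum : ∑ n, g n ≤ (a + 1) * ∑ n, x n - a * N := by
    calc ∑ n, g n ≤ ∑ n, ((a + 1) * x n - a) := Finset.sum_le_sum fun n _ => key n
      _ = (a + 1) * ∑ n, x n - a * N := by
        rw [Finset.sum_sub_distrib, ← Finset.mul_sum]; simp [mul_comm]
  set s : ℝ := (1 / N) * ∑ n, x n with hs
  have hs1 : 1 ≤ s := by
    rw [hs, one_div, inv_mul_eq_div, le_div_iff₀ hNpos, one_mul]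
    calc (N:ℝ) = ∑ _n : Fin N, (1:ℝ) := by simp
      _ ≤ ∑ n, x n := Finset.sum_le_sum fun n _ => hx1 n
  have hspos : (0:ℝ) < s := by linarith
  have hnum : (1 / N) * ∑ n, g n - s ^ 2 ≤ (a + 1) * s - a - s ^ 2 := by
    have : (1 / N) * ∑ n, g n ≤ (a + 1) * s - a := by
      rw [hs]
      have := mul_le_mul_of_nonneg_left hsum (le_of_lt (one_div_pos.mpr hNpos))
      calc (1 / N) * ∑ n, g n ≤ (1 / N) * ((a + 1) * ∑ n, x n - a * N) := this
        _ = (a + 1) * ((1 / N) * ∑ n, x n) - a := by field_simp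
    linarith
  rw [div_le_div_iff₀ (by positivity) (by positivity)]
  nlinarith [sq_nonneg ((a + 1) * s - 2 * a), sq_nonneg s, hnum, hspos, hs1, ha1]
end

section
/- Let $\lambda \in (0,1)$ and set $G = 2 + \sqrt{\frac{2\pi}{-\log\lambda}}$. Let $g_1,\dots,g_N$ be reals with $1 \le g_n \le G$. Then $\frac{\frac{1}{N}\sum_n g_n - \left(\frac{1}{N}\sum_n \sqrt{g_n}\right)^2}{\left(\frac{1}{N}\sum_n \sqrt{g_n}\right)^2} \le \frac{(\sqrt{G}-1)^2}{4\sqrt{G}}$. -/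
theorem stmt_15 (l : ℝ) (hl : l ∈ Set.Ioo (0:ℝ) 1)
    (G : ℝ) (hG : G = 2 + Real.sqrt (2 * Real.pi / (-Real.log l)))
    (N : ℕ) (hN : 0 < N) (g : Fin N → ℝ) (hg : ∀ n, 1 ≤ g n ∧ g n ≤ G) :
    ((1 / N) * ∑ n, g n - ((1 / N) * ∑ n, Real.sqrt (g n)) ^ 2)
        / ((1 / N) * ∑ n, Real.sqrt (g n)) ^ 2
      ≤ (Real.sqrt G - 1) ^ 2 / (4 * Real.sqrt G) := by
  set b := Real.sqrt G with hb
  have hG2 : (2:ℝ) ≤ G := by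
    rw [hG]; nlinarith [Real.sqrt_nonneg (2 * Real.pi / (-Real.log l))]
  have hb1 : (1:ℝ) ≤ b := by
    rw [hb]; rw [show (1:ℝ) = Real.sqrt 1 by simp]
    exact Real.sqrt_le_sqrt (by linarith)
  have hb0 : (0:ℝ) < b := by linarith
  set M := (1 / (N:ℝ)) * ∑ n, Real.sqrt (g n) with hM
  set A := (1 / (N:ℝ)) * ∑ n, g n with hA
  have hNpos : (0:ℝ) < N := by exact_mod_cast hN
  have hM1 : (1:ℝ) ≤ M := by
    have hsum : (N:ℝ) ≤ ∑ n, Real.sqrt (g n) := by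
      calc (N:ℝ) = ∑ _n : Fin N, (1:ℝ) := by simp
        _ ≤ ∑ n, Real.sqrt (g n) := by
            apply Finset.sum_le_sum
            intro i _
            exact Real.one_le_sqrt.mpr (hg i).1
    have h := mul_le_mul_of_nonneg_left hsum (by positivity : (0:ℝ) ≤ 1 / (N:ℝ))
    rw [hM]
    calc (1:ℝ) = (1 / (N:ℝ)) * N := by field_simp
      _ ≤ _ := h
  have hAM : A ≤ (1 + b) * M - b := by
    have hpt : ∀ n : Fin N, g n ≤ (1 + b) * Real.sqrt (g n) - b := by
      intro n
      have h1 : (1:ℝ) ≤ Real.sqrt (g n) := Real.one_le_sqrt.mpr (hg n).1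
      have h2 : Real.sqrt (g n) ≤ b := Real.sqrt_le_sqrt (hg n).2
      have hsq : Real.sqrt (g n) ^ 2 = g n :=
        Real.sq_sqrt (by linarith [(hg n).1])
      nlinarith [mul_nonneg (sub_nonneg.mpr h1) (sub_nonneg.mpr h2)]
    have hsum : ∑ n, g n ≤ ∑ n, ((1 + b) * Real.sqrt (g n) - b) :=
      Finset.sum_le_sum fun i _ => hpt i
    have := mul_le_mul_of_nonneg_left hsum (by positivity : (0:ℝ) ≤ 1 / (N:ℝ))
    rw [hA, hM]
    calc (1 / (N:ℝ)) * ∑ n, g n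
        ≤ (1 / (N:ℝ)) * ∑ n, ((1 + b) * Real.sqrt (g n) - b) := this
      _ = (1 / (N:ℝ)) * ((1 + b) * ∑ n, Real.sqrt (g n) - N * b) := by
          rw [Finset.sum_sub_distrib, ← Finset.mul_sum]
          simp [mul_comm]
      _ = (1 + b) * ((1 / (N:ℝ)) * ∑ n, Real.sqrt (g n)) - b := by
          field_simp
  have hMpos : (0:ℝ) < M := by linarith
  rw [div_le_div_iff₀ (by positivity) (by positivity)]
  nlinarith [sq_nonneg ((b + 1) * M - 2 * b), mul_le_mul_of_nonneg_right hAM (le_of_lt hb0), mul_pos hMpos hb0, sq_nonneg (M - 1), sq_nonneg (b - 1)]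
end
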